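/- arXiv:0907.1562 — 8 statements merged into one kernel-verified Lean document; each statement's English description precedes it below -/
import Mathlib

section
/- For every triangle in the plane with area A and perimeter L, one has 12·√3·A ≤ L², with equality if and only if the triangle is equilateral. -/
/-!
In coordinates the area of a triangle is half the absolute value of the determinant of two of its
edge vectors: the triangle is the image of a standard triangle, which is half of the unit square,
under an affine map. Expanding squared distances in coordinates then gives Heron's formula
`16 A² = L · x y z` with `x = -l₁ + l₂ + l₃`, `y = l₁ - l₂ + l₃`, `z = l₁ + l₂ - l₃`, which are
nonnegative by the triangle inequality and sum to `L`. AM-GM, `27 x y z ≤ L³` with equality iff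
`x = y = z`, turns this into `432 A² ≤ L⁴`.
-/

open MeasureTheory Pointwise

local notation "ℝ²" => EuclideanSpace ℝ (Fin 2)

theorem cube_sum_sub_27_prod_eq (x y z : ℝ) :
    (x + y + z) ^ 3 - 27 * (x * y * z) =
      (x + y + z) * ((x - y) ^ 2 + (y - z) ^ 2 + (z - x) ^ 2) / 2 +
        3 * (x * (y - z) ^ 2 + y * (z - x) ^ 2 + z * (x - y) ^ 2) := by
  ring

theorem amgm_three_le {x y z : ℝ} (hx : 0 ≤ x) (hy : 0 ≤ y) (hz : 0 ≤ z) :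
    27 * (x * y * z) ≤ (x + y + z) ^ 3 :=
  sub_nonneg.1 (by rw [cube_sum_sub_27_prod_eq]; positivity)

theorem amgm_three_eq_iff {x y z : ℝ} (hx : 0 ≤ x) (hy : 0 ≤ y) (hz : 0 ≤ z) :
    27 * (x * y * z) = (x + y + z) ^ 3 ↔ x = y ∧ y = z := by
  refine ⟨fun h => ?_, fun ⟨hxy, hyz⟩ => by subst hxy hyz; ring⟩
  have hid := cube_sum_sub_27_prod_eq x y z
  have h0 : (x + y + z) * ((x - y) ^ 2 + (y - z) ^ 2 + (z - x) ^ 2) = 0 := by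
    refine le_antisymm ?_ (by positivity)
    nlinarith [mul_nonneg hx (sq_nonneg (y - z)), mul_nonneg hy (sq_nonneg (z - x)),
      mul_nonneg hz (sq_nonneg (x - y))]
  rcases mul_eq_zero.1 h0 with h | h
  · constructor <;> linarith
  · constructor <;> nlinarith [sq_nonneg (x - y), sq_nonneg (y - z), sq_nonneg (z - x)]

theorem isoperimetric_of_heron {a b c A : ℝ} (hA : 0 ≤ A)
    (ha : a ≤ b + c) (hb : b ≤ a + c) (hc : c ≤ a + b)
    (heron : 16 * A ^ 2 = (a + b + c) * ((-a + b + c) * (a - b + c) * (a + b - c))) :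
    12 * √3 * A ≤ (a + b + c) ^ 2 ∧ (12 * √3 * A = (a + b + c) ^ 2 ↔ a = b ∧ b = c) := by
  have hx : 0 ≤ -a + b + c := by linarith
  have hy : 0 ≤ a - b + c := by linarith
  have hz : 0 ≤ a + b - c := by linarith
  have hs : (-a + b + c) + (a - b + c) + (a + b - c) = a + b + c := by ring
  have hs₀ : 0 ≤ a + b + c := hs ▸ by positivity
  have hlhs : 0 ≤ 12 * √3 * A := by positivity
  have hlhs_sq : (12 * √3 * A) ^ 2 =
      (a + b + c) * (27 * ((-a + b + c) * (a - b + c) * (a + b - c))) := by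
    rw [mul_pow, mul_pow, Real.sq_sqrt (by norm_num)]
    linear_combination 27 * heron
  have hrhs_sq : ((a + b + c) ^ 2) ^ 2 = (a + b + c) * (a + b + c) ^ 3 := by ring
  constructor
  · rw [← pow_le_pow_iff_left₀ hlhs (by positivity) two_ne_zero, hlhs_sq, hrhs_sq]
    exact mul_le_mul_of_nonneg_left (hs ▸ amgm_three_le hx hy hz) hs₀
  · rw [← sq_eq_sq₀ hlhs (by positivity), hlhs_sq, hrhs_sq]
    rcases hs₀.eq_or_lt with h | h
    · simp only [← h, zero_mul, true_iff]
      constructor <;> linarith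
    · rw [mul_right_inj' h.ne', ← hs, amgm_three_eq_iff hx hy hz]
      constructor <;> rintro ⟨h₁, h₂⟩ <;> constructor <;> linarith

def cross (u v : ℝ²) : ℝ := u 0 * v 1 - u 1 * v 0

theorem dist_sq_eq_coords (P Q : ℝ²) : dist P Q ^ 2 = (P 0 - Q 0) ^ 2 + (P 1 - Q 1) ^ 2 := by
  rw [EuclideanSpace.dist_eq, Real.sq_sqrt (by positivity), Fin.sum_univ_two, Real.dist_eq,
    Real.dist_eq, sq_abs, sq_abs]

theorem heron_cross (P₁ P₂ P₃ : ℝ²) :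
    4 * cross (P₂ - P₁) (P₃ - P₁) ^ 2 =
      (dist P₂ P₃ + dist P₁ P₃ + dist P₁ P₂) * ((-dist P₂ P₃ + dist P₁ P₃ + dist P₁ P₂) *
        (dist P₂ P₃ - dist P₁ P₃ + dist P₁ P₂) * (dist P₂ P₃ + dist P₁ P₃ - dist P₁ P₂)) := by
  have heron_poly : ∀ a b c : ℝ, (a + b + c) * ((-a + b + c) * (a - b + c) * (a + b - c)) =
      2 * (a ^ 2 * b ^ 2 + b ^ 2 * c ^ 2 + c ^ 2 * a ^ 2) -
        ((a ^ 2) ^ 2 + (b ^ 2) ^ 2 + (c ^ 2) ^ 2) :=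
    fun a b c => by ring
  rw [heron_poly, dist_sq_eq_coords, dist_sq_eq_coords, dist_sq_eq_coords, cross]
  simp only [PiLp.sub_apply]
  ring

def stdTriangle : Set ℝ² := {x | 0 ≤ x 1 ∧ x 1 ≤ x 0 ∧ x 0 ≤ 1}

theorem measurableSet_stdTriangle : MeasurableSet stdTriangle := by
  unfold stdTriangle; measurability

theorem convex_stdTriangle : Convex ℝ stdTriangle := by
  rintro x ⟨hx₁, hx₁₀, hx₀⟩ y ⟨hy₁, hy₁₀, hy₀⟩ a b ha hb hab
  simp only [stdTriangle, Set.mem_ofPred_eq, PiLp.add_apply, PiLp.smul_apply, smul_eq_mul]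
  exact ⟨by positivity, by gcongr, by nlinarith⟩

theorem convexHull_stdTriangle :
    convexHull ℝ {0, !₂[1, 0], !₂[1, 1]} = stdTriangle := by
  refine (convexHull_min ?_ convex_stdTriangle).antisymm fun x ⟨hx₁, hx₁₀, hx₀⟩ => ?_
  · rintro x (rfl | rfl | rfl) <;> simp [stdTriangle]
  · have hx : x = ∑ i, ![1 - x 0, x 0 - x 1, x 1] i • ![0, !₂[1, 0], !₂[1, 1]] i := by
      ext i; fin_cases i <;> simp [Fin.sum_univ_three]
    rw [hx]
    refine (convex_convexHull ℝ _).sum_mem (fun i _ => ?_) (by simp [Fin.sum_univ_three])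
      (fun i _ => ?_)
    · fin_cases i <;> simp [hx₀, hx₁, hx₁₀]
    · fin_cases i <;> apply subset_convexHull <;> simp

theorem volume_unitSquare : volume {x : ℝ² | ∀ i, x i ∈ Set.Icc 0 1} = 1 := by
  have := (EuclideanSpace.basisFun (Fin 2) ℝ).volume_parallelepiped
  rwa [← OrthonormalBasis.coe_toBasis, parallelepiped_basis_eq] at this

theorem volume_diagonal : volume {x : ℝ² | x 0 = x 1} = 0 := by
  let ℓ : ℝ² →ₗ[ℝ] ℝ := (EuclideanSpace.proj 0 - EuclideanSpace.proj 1 : ℝ² →L[ℝ] ℝ)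
  have hℓ : LinearMap.ker ℓ ≠ ⊤ := fun h => by
    simpa [ℓ] using LinearMap.congr_fun (LinearMap.ker_eq_top.1 h) (EuclideanSpace.single 0 1)
  convert Measure.addHaar_submodule volume _ hℓ using 2
  ext x
  simp [ℓ, sub_eq_zero]

theorem volume_stdTriangle : volume stdTriangle = 2⁻¹ := by
  let σ : ℝ² ≃ₗᵢ[ℝ] ℝ² := LinearIsometryEquiv.piLpCongrLeft 2 ℝ ℝ (Equiv.swap 0 1)
  have hσ : ∀ x : ℝ², σ x 0 = x 1 ∧ σ x 1 = x 0 := fun x => by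
    simp [σ, LinearIsometryEquiv.piLpCongrLeft_apply, Equiv.piCongrLeft'_apply]
  have hswap : volume (σ ⁻¹' stdTriangle) = volume stdTriangle :=
    σ.measurePreserving.measure_preimage measurableSet_stdTriangle.nullMeasurableSet
  have hunion : stdTriangle ∪ σ ⁻¹' stdTriangle = {x : ℝ² | ∀ i, x i ∈ Set.Icc 0 1} := by
    ext x
    simp only [stdTriangle, Set.mem_union, Set.mem_preimage, Set.mem_ofPred_eq, hσ,
      Fin.forall_fin_two, Set.mem_Icc]
    constructor
    · rintro (h | h) <;> refine ⟨⟨?_, ?_⟩, ?_, ?_⟩ <;> linarith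
    · rintro ⟨⟨h₀, h₁⟩, h₂, h₃⟩
      rcases le_total (x 1) (x 0) with h | h
      exacts [Or.inl ⟨h₂, h, h₁⟩, Or.inr ⟨h₀, h, h₃⟩]
  have hinter : stdTriangle ∩ σ ⁻¹' stdTriangle ⊆ {x : ℝ² | x 0 = x 1} := by
    rintro x ⟨⟨-, h, -⟩, ⟨-, h', -⟩⟩
    rw [(hσ x).1, (hσ x).2] at h'
    exact le_antisymm h' h
  have := measure_union_add_inter (μ := volume) stdTriangle
    (measurableSet_stdTriangle.preimage σ.continuous.measurable)
  rw [hunion, volume_unitSquare, measure_mono_null hinter volume_diagonal, hswap, add_zero] at this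
  exact ENNReal.eq_inv_of_mul_eq_one_left (by rw [mul_two, this])

theorem volume_convexHull_zero_triple (u v : ℝ²) :
    volume (convexHull ℝ {0, u, v}) = ENNReal.ofReal (|cross u v| / 2) := by
  let f : ℝ² →ₗ[ℝ] ℝ² := Matrix.toLpLin 2 2 !![u 0, v 0 - u 0; u 1, v 1 - u 1]
  have hf : f '' {0, !₂[1, 0], !₂[1, 1]} = {0, u, v} := by
    have hu : f !₂[1, 0] = u := by ext i; fin_cases i <;> simp [f, Matrix.toLpLin_apply]
    have hv : f !₂[1, 1] = v := by ext i; fin_cases i <;> simp [f, Matrix.toLpLin_apply]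
    simp only [Set.image_insert_eq, Set.image_singleton, map_zero, hu, hv]
  have hdet : LinearMap.det f = cross u v := by
    rw [LinearMap.det_toLpLin, Matrix.det_fin_two_of, cross]
    ring
  rw [← hf, ← f.image_convexHull, convexHull_stdTriangle, Measure.addHaar_image_linearMap, hdet,
    volume_stdTriangle, ENNReal.ofReal_div_of_pos two_pos, ENNReal.ofReal_ofNat, div_eq_mul_inv]

theorem volume_convexHull_triple (P₁ P₂ P₃ : ℝ²) :
    volume (convexHull ℝ {P₁, P₂, P₃}) = ENNReal.ofReal (|cross (P₂ - P₁) (P₃ - P₁)| / 2) := by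
  have : {P₁, P₂, P₃} = P₁ +ᵥ ({0, P₂ - P₁, P₃ - P₁} : Set ℝ²) := by
    simp [Set.vadd_set_insert]
  rw [this, convexHull_vadd, measure_vadd, volume_convexHull_zero_triple]

theorem stmt_0_general (P₁ P₂ P₃ : EuclideanSpace ℝ (Fin 2))
    (l₁ l₂ l₃ L A : ℝ)
    (hl₁ : l₁ = dist P₂ P₃) (hl₂ : l₂ = dist P₁ P₃) (hl₃ : l₃ = dist P₁ P₂)
    (hL : L = l₁ + l₂ + l₃)
    (hA : A = (volume (convexHull ℝ ({P₁, P₂, P₃} : Set (EuclideanSpace ℝ (Fin 2))))).toReal) :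
    12 * Real.sqrt 3 * A ≤ L ^ 2 ∧
      (12 * Real.sqrt 3 * A = L ^ 2 ↔ (l₁ = l₂ ∧ l₂ = l₃)) := by
  have hA' : A = |cross (P₂ - P₁) (P₃ - P₁)| / 2 := by
    rw [hA, volume_convexHull_triple, ENNReal.toReal_ofReal (by positivity)]
  subst hL hl₁ hl₂ hl₃
  refine isoperimetric_of_heron (by rw [hA']; positivity) ?_ ?_ ?_ ?_
  · linarith [dist_triangle P₂ P₁ P₃, dist_comm P₁ P₂]
  · linarith [dist_triangle P₁ P₂ P₃, dist_comm P₂ P₃]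
  · linarith [dist_triangle P₁ P₃ P₂, dist_comm P₂ P₃]
  · rw [← heron_cross, hA']
    linear_combination 4 * (sq_abs (cross (P₂ - P₁) (P₃ - P₁)))

/-- For every triangle in the plane with area `A` and perimeter `L`,
`12·√3·A ≤ L²`, with equality iff the triangle is equilateral. -/
theorem stmt_0 (P₁ P₂ P₃ : EuclideanSpace ℝ (Fin 2))
    (hnc : ¬ Collinear ℝ ({P₁, P₂, P₃} : Set (EuclideanSpace ℝ (Fin 2))))
    (l₁ l₂ l₃ L A : ℝ)
    (hl₁ : l₁ = dist P₂ P₃) (hl₂ : l₂ = dist P₁ P₃) (hl₃ : l₃ = dist P₁ P₂)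
    (hL : L = l₁ + l₂ + l₃)
    (hA : A = (volume (convexHull ℝ ({P₁, P₂, P₃} : Set (EuclideanSpace ℝ (Fin 2))))).toReal) :
    12 * Real.sqrt 3 * A ≤ L ^ 2 ∧
      (12 * Real.sqrt 3 * A = L ^ 2 ↔ (l₁ = l₂ ∧ l₂ = l₃)) :=
  stmt_0_general P₁ P₂ P₃ l₁ l₂ l₃ L A hl₁ hl₂ hl₃ hL hA
end

section
/- For all real numbers r and s with 1 < r ≤ 2 and 0 ≤ s < 1, one has 2r − (1 + s²) ≥ √(3(r² − 1)(1 − s²)), with equality if and only if r = 2 and s = 0. -/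
/-!
With `t = 2 - r` and `u = s²`, the gap between the squares of the two sides is the sum of
squares `(t - u)² + 3u(1 - t)²`. It vanishes only if `u = 0` (as `r ≠ 1`) and then `t = 0`.
-/

lemma sq_sub_eq_sum_sq (r s : ℝ) :
    (2 * r - (1 + s ^ 2)) ^ 2 - 3 * (r ^ 2 - 1) * (1 - s ^ 2) =
      (2 - r - s ^ 2) ^ 2 + 3 * s ^ 2 * (r - 1) ^ 2 := by
  ring

lemma sum_sq_eq_zero_iff {r s : ℝ} (hr : r ≠ 1) :
    (2 - r - s ^ 2) ^ 2 + 3 * s ^ 2 * (r - 1) ^ 2 = 0 ↔ r = 2 ∧ s = 0 := by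
  have hr' : (r - 1) ^ 2 ≠ 0 := pow_ne_zero 2 (sub_ne_zero.mpr hr)
  constructor
  · intro h
    have hs : s = 0 := by
      have : 3 * s ^ 2 * (r - 1) ^ 2 = 0 := by nlinarith [sq_nonneg (2 - r - s ^ 2)]
      simpa [hr'] using this
    subst hs
    exact ⟨by nlinarith, rfl⟩
  · rintro ⟨rfl, rfl⟩
    norm_num

theorem stmt_9_general (r s : ℝ) (hr1 : 1 < r) (hs0 : 0 ≤ s) (hs1 : s < 1) :
    Real.sqrt (3 * (r ^ 2 - 1) * (1 - s ^ 2)) ≤ 2 * r - (1 + s ^ 2) ∧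
    (2 * r - (1 + s ^ 2) = Real.sqrt (3 * (r ^ 2 - 1) * (1 - s ^ 2)) ↔ r = 2 ∧ s = 0) := by
  have hpos : 0 < 2 * r - (1 + s ^ 2) := by nlinarith
  have hgap := sq_sub_eq_sum_sq r s
  constructor
  · have : 0 ≤ (2 - r - s ^ 2) ^ 2 + 3 * s ^ 2 * (r - 1) ^ 2 := by positivity
    rw [Real.sqrt_le_left hpos.le]
    linarith
  · rw [eq_comm, Real.sqrt_eq_iff_mul_self_eq_of_pos hpos, ← sq, ← sub_eq_zero, hgap,
      sum_sq_eq_zero_iff hr1.ne']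

/-- For `1 < r ≤ 2` and `0 ≤ s < 1`, `2r − (1+s²) ≥ √(3(r²−1)(1−s²))`,
with equality iff `r = 2` and `s = 0`. -/
theorem stmt_9 (r s : ℝ) (hr1 : 1 < r) (hr2 : r ≤ 2) (hs0 : 0 ≤ s) (hs1 : s < 1) :
    Real.sqrt (3 * (r ^ 2 - 1) * (1 - s ^ 2)) ≤ 2 * r - (1 + s ^ 2) ∧
    (2 * r - (1 + s ^ 2) = Real.sqrt (3 * (r ^ 2 - 1) * (1 - s ^ 2)) ↔ r = 2 ∧ s = 0) :=
  stmt_9_general r s hr1 hs0 hs1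
end

section
/- The function u₁(x,y) = 2·[cos(π(2x−1)/3) + cos(2πy/√3)]·sin(π(2x−1)/3) satisfies the eigenvalue equation Δu₁ = −(16π²/9)·u₁ at every point of ℝ², where Δu₁ = ∂²u₁/∂x² + ∂²u₁/∂y². -/
/-!
With `θ = π(2x−1)/3` and `χ = 2πy/√3`, the double-angle formula gives
`u₁ = sin 2θ + 2 sin θ cos χ`. Each term is a product of solutions of `f'' = -k² f` in the
affine phases `θ` and `χ`, so it is a Laplace eigenfunction with eigenvalue `-(4π/3)²`,
resp. `-((2π/3)² + (2π/√3)²)`; both equal `-16π²/9`.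
-/

open Real

lemma deriv_deriv_eq_of_hasDerivAt {𝕜 F : Type*} [NontriviallyNormedField 𝕜]
    [NormedAddCommGroup F] [NormedSpace 𝕜 F] {f f' : 𝕜 → F} {x : 𝕜} {a : F}
    (hf : ∀ t, HasDerivAt f (f' t) t) (hf' : HasDerivAt f' a x) :
    deriv (fun t => deriv f t) x = a := by
  simpa only [fun t => (hf t).deriv] using hf'.deriv

section LinearPhase

variable {φ ψ : ℝ → ℝ} {c e : ℝ}

lemma deriv_deriv_sin_add_sin (hφ : ∀ t, HasDerivAt φ c t) (hψ : ∀ t, HasDerivAt ψ e t)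
    (A B x : ℝ) :
    deriv (fun t => deriv (fun s => A * sin (φ s) + B * sin (ψ s)) t) x
      = -(A * c ^ 2 * sin (φ x) + B * e ^ 2 * sin (ψ x)) := by
  refine deriv_deriv_eq_of_hasDerivAt
    (fun t => ((hφ t).sin.const_mul A).add ((hψ t).sin.const_mul B)) ?_
  exact (((hφ x).cos.mul_const c).const_mul A |>.add (((hψ x).cos.mul_const e).const_mul B))
    |>.congr_deriv (by ring)

lemma deriv_deriv_const_add_cos (hφ : ∀ t, HasDerivAt φ c t) (A B x : ℝ) :
    deriv (fun t => deriv (fun s => A + B * cos (φ s)) t) x = -(B * c ^ 2 * cos (φ x)) := by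
  refine deriv_deriv_eq_of_hasDerivAt (fun t => ((hφ t).cos.const_mul B).const_add A) ?_
  exact (((hφ x).sin.neg.mul_const c).const_mul B).congr_deriv (by ring)

end LinearPhase

/-- The function `u₁` satisfies `Δu₁ = −(16π²/9) u₁` on all of `ℝ²`. -/
theorem stmt_10 (u₁ : ℝ → ℝ → ℝ)
    (hu₁ : ∀ x y, u₁ x y =
      2 * (cos (π * (2 * x - 1) / 3) + cos (2 * π * y / sqrt 3)) * sin (π * (2 * x - 1) / 3)) :
    ∀ x y : ℝ,
      deriv (fun t => deriv (fun s => u₁ s y) t) x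
        + deriv (fun t => deriv (fun s => u₁ x s) t) y
      = -(16 * π ^ 2 / 9) * u₁ x y := by
  intro x y
  have hθ (t : ℝ) : HasDerivAt (fun s => π * (2 * s - 1) / 3) (2 * π / 3) t :=
    ((((hasDerivAt_id t).const_mul 2).sub_const 1).const_mul π).div_const 3
      |>.congr_deriv (by ring)
  have hχ (t : ℝ) : HasDerivAt (fun s => 2 * π * s / sqrt 3) (2 * π / sqrt 3) t :=
    ((hasDerivAt_id t).const_mul (2 * π)).div_const (sqrt 3) |>.congr_deriv (by ring)
  have hx : (fun s => u₁ s y) = fun s => 1 * sin (2 * (π * (2 * s - 1) / 3))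
      + 2 * cos (2 * π * y / sqrt 3) * sin (π * (2 * s - 1) / 3) := by
    funext s; rw [hu₁, sin_two_mul]; ring
  have hy : (fun s => u₁ x s) = fun s => 2 * cos (π * (2 * x - 1) / 3) * sin (π * (2 * x - 1) / 3)
      + 2 * sin (π * (2 * x - 1) / 3) * cos (2 * π * s / sqrt 3) := by
    funext s; rw [hu₁]; ring
  rw [hx, hy, deriv_deriv_sin_add_sin (fun t => (hθ t).const_mul 2) hθ,
    deriv_deriv_const_add_cos hχ, hu₁, sin_two_mul]
  have hχ_sq : (2 * π / sqrt 3) ^ 2 = 4 * π ^ 2 / 3 := by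
    rw [div_pow, mul_pow, sq_sqrt (by norm_num)]; ring
  linear_combination (-2 * sin (π * (2 * x - 1) / 3) * cos (2 * π * y / sqrt 3)) * hχ_sq
end

section
/- The function u₁(x,y) = 2·[cos(π(2x−1)/3) + cos(2πy/√3)]·sin(π(2x−1)/3) satisfies the Neumann boundary condition on the equilateral triangle E with vertices (0,0), (1,0), (1/2,√3/2): (i) ∂u₁/∂y (x,0) = 0 for all 0 ≤ x ≤ 1; (ii) √3·∂u₁/∂x + ∂u₁/∂y = 0 at every point (x,y) with x + y/√3 = 1 and 0 ≤ y ≤ √3/2; (iii) √3·∂u₁/∂x − ∂u₁/∂y = 0 at every point (x,y) with x − y/√3 = 0 and 0 ≤ y ≤ √3/2. -/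
/-!
Write `a = π(2x - 1)/3` and `b = 2πy/√3`, so that `u₁ = 2 (cos a + cos b) sin a`; since
`∂b/∂y = √3 ∂a/∂x`, both slanted normal derivatives reduce to multiples of
`cos 2a + cos (a ± b)`. On the side `x + y/√3 = 1` one has `2a + (a + b) = π`, and on the side
`x = y/√3` one has `2a + (a - b) = -π`; in both cases the two cosines cancel. On `y = 0` the
`y`-derivative carries the factor `sin b = 0`.
-/

open Real

noncomputable section

def phaseX (x : ℝ) : ℝ := π * (2 * x - 1) / 3

def phaseY (y : ℝ) : ℝ := 2 * π * y / √3

def neumannMode (x y : ℝ) : ℝ := 2 * (cos (phaseX x) + cos (phaseY y)) * sin (phaseX x)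

end

lemma hasDerivAt_phaseX (x : ℝ) : HasDerivAt phaseX (2 * π / 3) x := by
  have h := ((((hasDerivAt_id' x).const_mul 2).sub_const 1).const_mul π).div_const 3
  exact h.congr_deriv (by ring)

lemma hasDerivAt_phaseY (y : ℝ) : HasDerivAt phaseY (√3 * (2 * π / 3)) y := by
  have h := ((hasDerivAt_id' y).const_mul (2 * π)).div_const √3
  refine h.congr_deriv ?_
  field_simp
  rw [Real.sq_sqrt (by norm_num)]

lemma deriv_neumannMode_fst (x y : ℝ) :
    deriv (fun t => neumannMode t y) x =
      4 * π / 3 * (cos (2 * phaseX x) + cos (phaseX x) * cos (phaseY y)) := by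
  have ha := hasDerivAt_phaseX x
  have h := ((ha.cos.add_const (cos (phaseY y))).const_mul 2).mul ha.sin
  refine h.deriv.trans ?_
  rw [cos_two_mul']
  ring

lemma deriv_neumannMode_snd (x y : ℝ) :
    deriv (fun s => neumannMode x s) y =
      -(4 * π / 3) * √3 * sin (phaseY y) * sin (phaseX x) := by
  have h := (((hasDerivAt_phaseY y).cos.const_add (cos (phaseX x))).const_mul 2).mul_const
    (sin (phaseX x))
  refine h.deriv.trans ?_
  ring

lemma cos_add_cos_eq_zero_of_add_eq_pi {s t : ℝ} (h : s + t = π) : cos s + cos t = 0 := by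
  rw [show s = π - t by linarith, cos_pi_sub]
  ring

lemma cos_add_cos_eq_zero_of_add_eq_neg_pi {s t : ℝ} (h : s + t = -π) : cos s + cos t = 0 := by
  rw [← cos_neg s, ← cos_neg t]
  exact cos_add_cos_eq_zero_of_add_eq_pi (by linarith)

lemma phases_sum_eq_pi_of_add_eq_one {x y : ℝ} (h : x + y / √3 = 1) :
    2 * phaseX x + (phaseX x + phaseY y) = π := by
  unfold phaseX phaseY
  linear_combination (2 * π) * h

lemma phases_sum_eq_neg_pi_of_sub_eq_zero {x y : ℝ} (h : x - y / √3 = 0) :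
    2 * phaseX x + (phaseX x - phaseY y) = -π := by
  unfold phaseX phaseY
  linear_combination (2 * π) * h

/-- The function `u₁` satisfies the Neumann boundary condition on the three sides of
the equilateral triangle with vertices `(0,0)`, `(1,0)`, `(1/2,√3/2)`. -/
theorem stmt_12 (u₁ : ℝ → ℝ → ℝ)
    (hu₁ : ∀ x y, u₁ x y =
      2 * (cos (π * (2 * x - 1) / 3) + cos (2 * π * y / sqrt 3)) * sin (π * (2 * x - 1) / 3)) :
    (∀ x : ℝ, 0 ≤ x → x ≤ 1 → deriv (fun s => u₁ x s) 0 = 0) ∧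
    (∀ x y : ℝ, x + y / sqrt 3 = 1 → 0 ≤ y → y ≤ sqrt 3 / 2 →
      sqrt 3 * deriv (fun t => u₁ t y) x + deriv (fun s => u₁ x s) y = 0) ∧
    (∀ x y : ℝ, x - y / sqrt 3 = 0 → 0 ≤ y → y ≤ sqrt 3 / 2 →
      sqrt 3 * deriv (fun t => u₁ t y) x - deriv (fun s => u₁ x s) y = 0) := by
  obtain rfl : u₁ = neumannMode := funext fun x => funext (hu₁ x)
  refine ⟨fun x _ _ => ?_, fun x y h _ _ => ?_, fun x y h _ _ => ?_⟩
  · simp [deriv_neumannMode_snd, phaseY]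
  · have hcos := cos_add_cos_eq_zero_of_add_eq_pi (phases_sum_eq_pi_of_add_eq_one h)
    rw [cos_add] at hcos
    rw [deriv_neumannMode_fst, deriv_neumannMode_snd]
    linear_combination 4 * π / 3 * √3 * hcos
  · have hcos := cos_add_cos_eq_zero_of_add_eq_neg_pi (phases_sum_eq_neg_pi_of_sub_eq_zero h)
    rw [cos_sub] at hcos
    rw [deriv_neumannMode_fst, deriv_neumannMode_snd]
    linear_combination 4 * π / 3 * √3 * hcos
end

section
/- For the equilateral triangle E with vertices (0,0), (1,0), (1/2,√3/2), the function u₁(x,y) = 2[cos(π(2x−1)/3) + cos(2πy/√3)]·sin(π(2x−1)/3) satisfies ∫_E (∂u₁/∂x)² dA = (32π² + 243)/(32√3), ∫_E (∂u₁/∂y)² dA = (32π² − 243)/(32√3), and ∫_E (∂u₁/∂x)(∂u₁/∂y) dA = 0. -/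
/-!
In the coordinates `θ = π (2x - 1) / 3`, `φ = 2π y / √3` one has
`∂ₓu₁ = (4π/3) (cos 2θ + cos θ cos φ)` and `∂ᵧu₁ = -(4π/√3) sin θ sin φ`. The reflection
`x ↦ 1 - x`, i.e. `θ ↦ -θ`, preserves the triangle; `∂ₓu₁` is even and `∂ᵧu₁` odd under it, so the
mixed integral vanishes and each square integrates to twice its integral over the left half, which
in these coordinates is `{-π/3 ≤ θ ≤ 0, 0 ≤ φ ≤ 3θ + π}`. After the inner integration in `φ`,
product-to-sum formulas turn the integrand into a combination of `(3θ + π) cos kθ` and `sin kθ`,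
whose primitives are explicit.
-/

open MeasureTheory Real Set

noncomputable def equilateralTriangle : Set (ℝ × ℝ) :=
  convexHull ℝ {(0, 0), (1, 0), (1 / 2, √3 / 2)}

lemma isCompact_equilateralTriangle : IsCompact equilateralTriangle :=
  (toFinite _).isCompact_convexHull (𝕜 := ℝ)

lemma equilateralTriangle_eq : equilateralTriangle =
    {p : ℝ × ℝ | p.1 ∈ Icc 0 1 ∧ p.2 ∈ Icc 0 (min (√3 * p.1) (√3 * (1 - p.1)))} := by
  have h3 : 0 < √3 := by positivity
  simp only [mem_Icc, le_min_iff]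
  apply subset_antisymm
  · refine convexHull_min ?_ ?_
    · rintro p (rfl | rfl | rfl) <;> refine ⟨⟨?_, ?_⟩, ?_, ?_, ?_⟩ <;> linarith
    · rintro ⟨x₁, y₁⟩ ⟨⟨hx₁, hx₁'⟩, hy₁, hy₁', hy₁''⟩ ⟨x₂, y₂⟩ ⟨⟨hx₂, hx₂'⟩, hy₂, hy₂', hy₂''⟩
        a b ha hb hab
      simp only [mem_ofPred_eq, Prod.smul_mk, Prod.mk_add_mk, smul_eq_mul]
      refine ⟨⟨by positivity, ?_⟩, by positivity, ?_, ?_⟩ <;>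
        nlinarith [mul_le_mul_of_nonneg_left hy₁' ha, mul_le_mul_of_nonneg_left hy₂' hb,
          mul_le_mul_of_nonneg_left hy₁'' ha, mul_le_mul_of_nonneg_left hy₂'' hb,
          mul_le_mul_of_nonneg_left hx₁' ha, mul_le_mul_of_nonneg_left hx₂' hb]
  · rintro ⟨x, y⟩ ⟨-, hy, hyx, hyx'⟩
    -- barycentric coordinates of `(x, y)` with respect to the three vertices
    set w : Fin 3 → ℝ := ![1 - x - y / √3, x - y / √3, 2 * y / √3]
    set z : Fin 3 → ℝ × ℝ := ![(0, 0), (1, 0), (1 / 2, √3 / 2)]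
    have hw : ∀ i ∈ Finset.univ, 0 ≤ w i := by
      have : y / √3 ≤ x := by rw [div_le_iff₀ h3]; linarith
      have : y / √3 ≤ 1 - x := by rw [div_le_iff₀ h3]; linarith
      intro i _; fin_cases i <;> simp [w] <;> first | linarith | positivity
    have hxy : (x, y) = ∑ i, w i • z i := by
      simp only [Fin.sum_univ_three, w, z, Matrix.cons_val_zero, Matrix.cons_val_one,
        Matrix.cons_val_two, Matrix.head_cons, Matrix.tail_cons, Prod.smul_mk, smul_eq_mul,
        Prod.mk_add_mk]
      congr 1 <;> field_simp <;> ring_nf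
    rw [hxy]
    refine (convex_convexHull ℝ _).sum_mem hw ?_ fun i _ => subset_convexHull ℝ _ ?_
    · simp [w, Fin.sum_univ_three]; ring
    · fin_cases i <;> simp [z]

theorem setIntegral_region_between_cc {E : Type*} [NormedAddCommGroup E] [NormedSpace ℝ E]
    [CompleteSpace E] {f : ℝ × ℝ → E} {g h : ℝ → ℝ} {a b : ℝ} (hab : a ≤ b)
    (hg : Measurable g) (hh : Measurable h) (hgh : ∀ x ∈ Icc a b, g x ≤ h x)
    (hf : IntegrableOn f {p : ℝ × ℝ | p.1 ∈ Icc a b ∧ p.2 ∈ Icc (g p.1) (h p.1)}) :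
    ∫ p in {p : ℝ × ℝ | p.1 ∈ Icc a b ∧ p.2 ∈ Icc (g p.1) (h p.1)}, f p
      = ∫ x in a..b, ∫ y in g x..h x, f (x, y) := by
  set S := {p : ℝ × ℝ | p.1 ∈ Icc a b ∧ p.2 ∈ Icc (g p.1) (h p.1)}
  have hS : MeasurableSet S := measurableSet_region_between_cc hg hh measurableSet_Icc
  have hfiber : ∀ x, ∫ y, S.indicator f (x, y)
      = (Icc a b).indicator (fun x => ∫ y in g x..h x, f (x, y)) x := by
    intro x
    by_cases hx : x ∈ Icc a b
    · rw [indicator_of_mem hx, intervalIntegral.integral_of_le (hgh x hx),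
        ← integral_Icc_eq_integral_Ioc, ← integral_indicator measurableSet_Icc]
      congr 1 with y
      simp [S, indicator_apply, mem_Icc.mp hx]
    · simp [S, show ¬(a ≤ x ∧ x ≤ b) from hx]
  rw [← integral_indicator hS, Measure.volume_eq_prod,
    integral_prod _ ((integrable_indicator_iff hS).2 hf), intervalIntegral.integral_of_le hab,
    ← integral_Icc_eq_integral_Ioc, ← integral_indicator measurableSet_Icc]
  simp only [hfiber]

lemma integral_equilateralTriangle {f : ℝ → ℝ → ℝ} (hf : Continuous (Function.uncurry f)) :
    ∫ p in equilateralTriangle, f p.1 p.2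
      = ∫ x in 0..1, ∫ y in 0..min (√3 * x) (√3 * (1 - x)), f x y := by
  have hint : IntegrableOn (Function.uncurry f) equilateralTriangle :=
    hf.continuousOn.integrableOn_compact isCompact_equilateralTriangle
  rw [equilateralTriangle_eq] at hint ⊢
  refine setIntegral_region_between_cc (f := fun p => f p.1 p.2) (g := fun _ => 0)
    (h := fun x => min (√3 * x) (√3 * (1 - x))) zero_le_one measurable_const
    (by fun_prop) (fun x hx => ?_) hint
  have := hx.1; have := hx.2
  exact le_min (by positivity) (by nlinarith [sqrt_nonneg 3])

lemma integral_equilateralTriangle_of_symm {f : ℝ → ℝ → ℝ} (hf : Continuous (Function.uncurry f))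
    (hsymm : ∀ x y, f (1 - x) y = f x y) :
    ∫ p in equilateralTriangle, f p.1 p.2 = 2 * ∫ x in 0..1 / 2, ∫ y in 0..√3 * x, f x y := by
  set Φ : ℝ → ℝ := fun x => ∫ y in 0..min (√3 * x) (√3 * (1 - x)), f x y
  have hΦ : Continuous Φ := by fun_prop
  have hΦsymm : ∀ x, Φ (1 - x) = Φ x := fun x => by simp only [Φ, hsymm, sub_sub_cancel, min_comm]
  have hreflect : ∫ x in 1 / 2..1, Φ x = ∫ x in 0..1 / 2, Φ x := by
    have := intervalIntegral.integral_comp_sub_left Φ 1 (a := 0) (b := 1 / 2)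
    norm_num [hΦsymm] at this
    exact this.symm
  have hhalf : ∫ x in 0..1 / 2, Φ x = ∫ x in 0..1 / 2, ∫ y in 0..√3 * x, f x y := by
    refine intervalIntegral.integral_congr fun x hx => ?_
    rw [uIcc_of_le (by norm_num)] at hx
    simp only [Φ, min_eq_left (by nlinarith [sqrt_nonneg 3, hx.2] : √3 * x ≤ √3 * (1 - x))]
  rw [integral_equilateralTriangle hf, ← intervalIntegral.integral_add_adjacent_intervals
    (hΦ.intervalIntegrable 0 (1 / 2)) (hΦ.intervalIntegrable _ 1), hreflect, hhalf, two_mul]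

lemma integral_equilateralTriangle_of_antisymm {f : ℝ → ℝ → ℝ}
    (hf : Continuous (Function.uncurry f)) (hanti : ∀ x y, f (1 - x) y = -f x y) :
    ∫ p in equilateralTriangle, f p.1 p.2 = 0 := by
  set Φ : ℝ → ℝ := fun x => ∫ y in 0..min (√3 * x) (√3 * (1 - x)), f x y
  have hΦanti : ∀ x, Φ (1 - x) = -Φ x := fun x => by
    simp only [Φ, hanti, sub_sub_cancel, min_comm, intervalIntegral.integral_neg]
  have hreflect := intervalIntegral.integral_comp_sub_left Φ 1 (a := 0) (b := 1)
  simp only [hΦanti, intervalIntegral.integral_neg, sub_zero, sub_self] at hreflect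
  rw [integral_equilateralTriangle hf]
  linarith

lemma integral_equilateralTriangle_angular_of_odd {F : ℝ → ℝ → ℝ}
    (hF : Continuous (Function.uncurry F)) (hodd : ∀ θ φ, F (-θ) φ = -F θ φ) :
    ∫ p in equilateralTriangle, F (π * (2 * p.1 - 1) / 3) (2 * π * p.2 / √3) = 0 :=
  integral_equilateralTriangle_of_antisymm
    (f := fun x y => F (π * (2 * x - 1) / 3) (2 * π * y / √3))
    (by fun_prop) (fun x y => by rw [← hodd]; ring_nf)

lemma integral_equilateralTriangle_angular {F : ℝ → ℝ → ℝ} (hF : Continuous (Function.uncurry F))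
    (heven : ∀ θ φ, F (-θ) φ = F θ φ) :
    ∫ p in equilateralTriangle, F (π * (2 * p.1 - 1) / 3) (2 * π * p.2 / √3)
      = 3 * √3 / (2 * π ^ 2) * ∫ θ in -(π / 3)..0, ∫ φ in 0..3 * θ + π, F θ φ := by
  have hθ : ∀ x, π * (2 * x - 1) / 3 = 2 * π / 3 * x - π / 3 := fun x => by ring
  have hinner : ∀ x, ∫ y in 0..√3 * x, F (π * (2 * x - 1) / 3) (2 * π * y / √3)
      = √3 / (2 * π) * ∫ φ in 0..3 * (π * (2 * x - 1) / 3) + π, F (π * (2 * x - 1) / 3) φ := by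
    intro x
    simp only [mul_div_right_comm (2 * π),
      intervalIntegral.integral_comp_mul_left (F _) (by positivity : 2 * π / √3 ≠ 0)]
    rw [mul_zero, smul_eq_mul, inv_div]
    congr 2
    field_simp
    ring
  rw [integral_equilateralTriangle_of_symm
    (f := fun x y => F (π * (2 * x - 1) / 3) (2 * π * y / √3))
    (by fun_prop) (fun x y => by rw [← heven]; ring_nf)]
  simp only [hinner, intervalIntegral.integral_const_mul]
  simp only [hθ]
  rw [intervalIntegral.integral_comp_mul_sub (fun θ => ∫ φ in 0..3 * θ + π, F θ φ)
    (by positivity : 2 * π / 3 ≠ 0), smul_eq_mul, mul_zero, zero_sub,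
    show 2 * π / 3 * (1 / 2) - π / 3 = 0 by ring]
  field_simp

lemma hasDerivAt_sin_mul (k x : ℝ) : HasDerivAt (fun t => sin (k * t)) (k * cos (k * x)) x := by
  simpa [mul_comm] using ((hasDerivAt_id x).const_mul k).sin

lemma hasDerivAt_cos_mul (k x : ℝ) : HasDerivAt (fun t => cos (k * t)) (-(k * sin (k * x))) x := by
  simpa [mul_comm] using ((hasDerivAt_id x).const_mul k).cos

lemma cos_mul_neg_pi_div_three : cos (2 * -(π / 3)) = -1 / 2 ∧ cos (4 * -(π / 3)) = -1 / 2 ∧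
    cos (6 * -(π / 3)) = 1 ∧ cos (8 * -(π / 3)) = -1 / 2 := by
  have h2 : cos (2 * -(π / 3)) = -1 / 2 := by
    rw [cos_two_mul, cos_neg, cos_pi_div_three]; norm_num
  have h4 : cos (4 * -(π / 3)) = -1 / 2 := by
    rw [show 4 * -(π / 3) = 2 * (2 * -(π / 3)) by ring, cos_two_mul, h2]; norm_num
  refine ⟨h2, h4, ?_, ?_⟩
  · rw [show 6 * -(π / 3) = -(2 * π) by ring, cos_neg, cos_two_pi]
  · rw [show 8 * -(π / 3) = 2 * (4 * -(π / 3)) by ring, cos_two_mul, h4]; norm_num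

lemma integral_sq_cos_two_mul_add_cos_mul_cos (θ : ℝ) :
    ∫ φ in 0..3 * θ + π, (cos (2 * θ) + cos θ * cos φ) ^ 2
      = (3 * θ + π) * (3 / 4 + cos (2 * θ) / 4 + cos (4 * θ) / 2)
        - 3 * sin (6 * θ) / 8 - 7 * sin (4 * θ) / 16 - sin (2 * θ) / 2 + sin (8 * θ) / 16 := by
  have hderiv : ∀ φ, HasDerivAt (fun φ => φ * cos (2 * θ) ^ 2 + 2 * cos (2 * θ) * cos θ * sin φ
      + cos θ ^ 2 * (φ / 2 + sin (2 * φ) / 4)) ((cos (2 * θ) + cos θ * cos φ) ^ 2) φ := by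
    intro φ
    refine ((((hasDerivAt_id φ).mul_const _).fun_add ((hasDerivAt_sin φ).const_mul _)).fun_add
      ((((hasDerivAt_id φ).div_const 2).fun_add ((hasDerivAt_sin_mul 2 φ).div_const 4)).const_mul
        _)).congr_deriv ?_
    rw [cos_two_mul φ]
    ring
  rw [intervalIntegral.integral_eq_sub_of_hasDerivAt (fun φ _ => hderiv φ)
    ((Continuous.intervalIntegrable (by fun_prop) _ _)), sin_add_pi,
    show 2 * (3 * θ + π) = 6 * θ + 2 * π by ring, sin_add_two_pi]
  have p1 : cos (2 * θ) ^ 2 = 1 / 2 + cos (4 * θ) / 2 := by rw [cos_sq]; ring_nf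
  have p2 : cos θ ^ 2 = 1 / 2 + cos (2 * θ) / 2 := cos_sq θ
  have p3 : 2 * cos (2 * θ) * cos θ = cos θ + cos (3 * θ) := by rw [two_mul_cos_mul_cos]; ring_nf
  have p4 : 2 * sin (3 * θ) * cos θ = sin (2 * θ) + sin (4 * θ) := by
    rw [two_mul_sin_mul_cos]; ring_nf
  have p5 : 2 * sin (3 * θ) * cos (3 * θ) = sin (6 * θ) := by rw [← sin_two_mul]; ring_nf
  have p6 : 2 * sin (6 * θ) * cos (2 * θ) = sin (4 * θ) + sin (8 * θ) := by
    rw [two_mul_sin_mul_cos]; ring_nf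
  simp only [mul_zero, zero_mul, sin_zero, zero_div, add_zero, sub_zero]
  linear_combination (3 * θ + π) * p1 + ((3 * θ + π) / 2 + sin (6 * θ) / 4) * p2
    - sin (3 * θ) * p3 - p4 / 2 - p5 / 2 + p6 / 16

lemma integral_sq_sin_mul_sin (θ : ℝ) :
    ∫ φ in 0..3 * θ + π, (sin θ * sin φ) ^ 2
      = (3 * θ + π) * (1 - cos (2 * θ)) / 4 - sin (6 * θ) / 8
        + (sin (4 * θ) + sin (8 * θ)) / 16 := by
  simp only [mul_pow, intervalIntegral.integral_const_mul, integral_sin_sq, sin_add_pi, cos_add_pi,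
    sin_zero, cos_zero]
  have q1 : sin θ ^ 2 = 1 / 2 - cos (2 * θ) / 2 := by
    linear_combination sin_sq_add_cos_sq θ - cos_sq θ
  have p5 : 2 * sin (3 * θ) * cos (3 * θ) = sin (6 * θ) := by rw [← sin_two_mul]; ring_nf
  have p6 : 2 * sin (6 * θ) * cos (2 * θ) = sin (4 * θ) + sin (8 * θ) := by
    rw [two_mul_sin_mul_cos]; ring_nf
  linear_combination ((3 * θ + π) - sin (3 * θ) * cos (3 * θ)) / 2 * q1
    - (1 - cos (2 * θ)) / 8 * p5 + p6 / 16

lemma integral_integral_sq_cos_two_mul_add_cos_mul_cos :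
    ∫ θ in -(π / 3)..0, ∫ φ in 0..3 * θ + π, (cos (2 * θ) + cos θ * cos φ) ^ 2
      = π ^ 2 / 8 + 243 / 256 := by
  have hderiv : ∀ θ, HasDerivAt (fun θ => (3 * θ + π) ^ 2 / 8
      + (3 * θ + π) * (sin (2 * θ) + sin (4 * θ)) / 8 + 7 * cos (2 * θ) / 16
      + 13 * cos (4 * θ) / 64 + cos (6 * θ) / 16 - cos (8 * θ) / 128)
      ((3 * θ + π) * (3 / 4 + cos (2 * θ) / 4 + cos (4 * θ) / 2)
        - 3 * sin (6 * θ) / 8 - 7 * sin (4 * θ) / 16 - sin (2 * θ) / 2 + sin (8 * θ) / 16) θ := by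
    intro θ
    have hl : HasDerivAt (fun t => 3 * t + π) 3 θ := by
      simpa using ((hasDerivAt_id θ).const_mul 3).add_const π
    refine (((((((hl.fun_pow 2).div_const 8).fun_add ((hl.fun_mul ((hasDerivAt_sin_mul 2 θ).fun_add
      (hasDerivAt_sin_mul 4 θ))).div_const 8)).fun_add
      (((hasDerivAt_cos_mul 2 θ).const_mul 7).div_const 16)).fun_add
      (((hasDerivAt_cos_mul 4 θ).const_mul 13).div_const 64)).fun_add
      ((hasDerivAt_cos_mul 6 θ).div_const 16)).fun_sub
      ((hasDerivAt_cos_mul 8 θ).div_const 128)).congr_deriv ?_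
    norm_num
    ring
  simp only [integral_sq_cos_two_mul_add_cos_mul_cos]
  rw [intervalIntegral.integral_eq_sub_of_hasDerivAt (fun θ _ => hderiv θ)
    (Continuous.intervalIntegrable (by fun_prop) _ _)]
  obtain ⟨h2, h4, h6, h8⟩ := cos_mul_neg_pi_div_three
  simp only [h2, h4, h6, h8, mul_zero, cos_zero, sin_zero, show 3 * -(π / 3) + π = 0 by ring]
  ring

lemma integral_integral_sq_sin_mul_sin :
    ∫ θ in -(π / 3)..0, ∫ φ in 0..3 * θ + π, (sin θ * sin φ) ^ 2 = π ^ 2 / 24 - 81 / 256 := by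
  have hderiv : ∀ θ, HasDerivAt (fun θ => (3 * θ + π) ^ 2 / 24 - (3 * θ + π) * sin (2 * θ) / 8
      - 3 * cos (2 * θ) / 16 + cos (6 * θ) / 48 - cos (4 * θ) / 64 - cos (8 * θ) / 128)
      ((3 * θ + π) * (1 - cos (2 * θ)) / 4 - sin (6 * θ) / 8
        + (sin (4 * θ) + sin (8 * θ)) / 16) θ := by
    intro θ
    have hl : HasDerivAt (fun t => 3 * t + π) 3 θ := by
      simpa using ((hasDerivAt_id θ).const_mul 3).add_const π
    refine ((((((hl.fun_pow 2).div_const 24).fun_sub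
      ((hl.fun_mul (hasDerivAt_sin_mul 2 θ)).div_const 8)).fun_sub
      (((hasDerivAt_cos_mul 2 θ).const_mul 3).div_const 16)).fun_add
      ((hasDerivAt_cos_mul 6 θ).div_const 48)).fun_sub
      ((hasDerivAt_cos_mul 4 θ).div_const 64)).fun_sub
      ((hasDerivAt_cos_mul 8 θ).div_const 128) |>.congr_deriv ?_
    norm_num
    ring
  simp only [integral_sq_sin_mul_sin]
  rw [intervalIntegral.integral_eq_sub_of_hasDerivAt (fun θ _ => hderiv θ)
    (Continuous.intervalIntegrable (by fun_prop) _ _)]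
  obtain ⟨h2, h4, h6, h8⟩ := cos_mul_neg_pi_div_three
  simp only [h2, h4, h6, h8, mul_zero, cos_zero, sin_zero, show 3 * -(π / 3) + π = 0 by ring]
  ring

noncomputable def triangleMode (x y : ℝ) : ℝ :=
  2 * (cos (π * (2 * x - 1) / 3) + cos (2 * π * y / √3)) * sin (π * (2 * x - 1) / 3)

lemma deriv_triangleMode_fst (x y : ℝ) :
    deriv (fun t => triangleMode t y) x = 4 * π / 3 *
      (cos (2 * (π * (2 * x - 1) / 3)) + cos (π * (2 * x - 1) / 3) * cos (2 * π * y / √3)) := by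
  have hθ : HasDerivAt (fun t => π * (2 * t - 1) / 3) (2 * π / 3) x :=
    (((((hasDerivAt_id x).const_mul 2).sub_const 1).const_mul π).div_const 3).congr_deriv
      (by simp; ring)
  refine ((((hθ.cos.add_const _).const_mul 2).fun_mul hθ.sin).congr_deriv ?_).deriv
  rw [cos_two_mul']
  ring

lemma deriv_triangleMode_snd (x y : ℝ) :
    deriv (fun s => triangleMode x s) y
      = -(4 * π / √3) * (sin (π * (2 * x - 1) / 3) * sin (2 * π * y / √3)) := by
  have hφ : HasDerivAt (fun s => 2 * π * s / √3) (2 * π / √3) y :=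
    (((hasDerivAt_id y).const_mul (2 * π)).div_const √3).congr_deriv (by simp)
  refine ((((hφ.cos.const_add _).const_mul 2).mul_const _).congr_deriv ?_).deriv
  ring

/-- Over the equilateral triangle `E` with vertices `(0,0)`, `(1,0)`, `(1/2,√3/2)`:
`∫_E (∂u₁/∂x)² = (32π²+243)/(32√3)`, `∫_E (∂u₁/∂y)² = (32π²−243)/(32√3)` and
`∫_E (∂u₁/∂x)(∂u₁/∂y) = 0`. -/
theorem stmt_14 (u₁ : ℝ → ℝ → ℝ)
    (hu₁ : ∀ x y, u₁ x y =
      2 * (cos (π * (2 * x - 1) / 3) + cos (2 * π * y / sqrt 3)) * sin (π * (2 * x - 1) / 3))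
    (E : Set (ℝ × ℝ))
    (hE : E = convexHull ℝ {((0 : ℝ), (0 : ℝ)), (1, 0), (1 / 2, sqrt 3 / 2)}) :
    (∫ p in E, (deriv (fun t => u₁ t p.2) p.1) ^ 2) = (32 * π ^ 2 + 243) / (32 * sqrt 3) ∧
    (∫ p in E, (deriv (fun s => u₁ p.1 s) p.2) ^ 2) = (32 * π ^ 2 - 243) / (32 * sqrt 3) ∧
    (∫ p in E, deriv (fun t => u₁ t p.2) p.1 * deriv (fun s => u₁ p.1 s) p.2) = 0 := by
  obtain rfl : u₁ = triangleMode := funext fun x => funext (hu₁ x)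
  obtain rfl : E = equilateralTriangle := hE
  simp only [deriv_triangleMode_fst, deriv_triangleMode_snd]
  refine ⟨?_, ?_, ?_⟩
  · rw [integral_equilateralTriangle_angular
      (F := fun θ φ => (4 * π / 3 * (cos (2 * θ) + cos θ * cos φ)) ^ 2) (by fun_prop) (by simp)]
    simp only [mul_pow (4 * π / 3), intervalIntegral.integral_const_mul,
      integral_integral_sq_cos_two_mul_add_cos_mul_cos]
    field_simp
    rw [sq_sqrt (by norm_num)]
    ring
  · rw [integral_equilateralTriangle_angular
      (F := fun θ φ => (-(4 * π / √3) * (sin θ * sin φ)) ^ 2) (by fun_prop) (by simp)]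
    simp only [mul_pow (-(4 * π / √3)), intervalIntegral.integral_const_mul,
      integral_integral_sq_sin_mul_sin]
    field_simp
    ring
  · exact integral_equilateralTriangle_angular_of_odd
      (F := fun θ φ =>
        4 * π / 3 * (cos (2 * θ) + cos θ * cos φ) * (-(4 * π / √3) * (sin θ * sin φ)))
      (by fun_prop) (by simp)
end

section
/- For the equilateral triangle E with vertices (0,0), (1,0), (1/2,√3/2), the functions u₁(x,y) = 2[cos(π(2x−1)/3) + cos(2πy/√3)]·sin(π(2x−1)/3) and u₂(x,y) = cos(2π(2x−1)/3) − 2cos(π(2x−1)/3)cos(2πy/√3) satisfy the orthogonality relations ∫_E u₁ u₂ dA = 0, ∫_E (∂u₁/∂x)(∂u₂/∂x) dA = 0, and ∫_E (∂u₁/∂y)(∂u₂/∂y) dA = 0. -/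
/-!
The reflection `(x, y) ↦ (1 - x, y)` in the axis of symmetry of `E` preserves both `E` and
Lebesgue measure. Under it `u₁` is odd and `u₂` is even, and `∂/∂x` swaps both parities while
`∂/∂y` keeps them, so each of the three integrands is odd and integrates to zero.
-/

open MeasureTheory Real

theorem setIntegral_eq_zero_of_comp_eq_neg {α E : Type*} [MeasurableSpace α]
    [NormedAddCommGroup E] [NormedSpace ℝ E] {μ : Measure α} (σ : α ≃ᵐ α)
    (hσ : MeasurePreserving σ μ μ) {s : Set α} (hs : σ ⁻¹' s = s) {f : α → E}
    (hf : ∀ p, f (σ p) = -f p) :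
    ∫ p in s, f p ∂μ = 0 := by
  have h := hσ.setIntegral_preimage_emb σ.measurableEmbedding f s
  rw [hs, funext hf, integral_neg, neg_eq_iff_add_eq_zero, ← two_smul ℝ] at h
  exact (smul_eq_zero.1 h).resolve_left two_ne_zero

noncomputable def reflectFst (a : ℝ) : (ℝ × ℝ) ≃ᵐ (ℝ × ℝ) :=
  (MeasurableEquiv.subLeft a).prodCongr (MeasurableEquiv.refl ℝ)

@[simp] lemma reflectFst_apply (a : ℝ) (p : ℝ × ℝ) : reflectFst a p = (a - p.1, p.2) := rfl

lemma measurePreserving_reflectFst (a : ℝ) : MeasurePreserving (reflectFst a) := by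
  rw [Measure.volume_eq_prod]
  exact (Measure.measurePreserving_sub_left volume a).prod (MeasurePreserving.id volume)

lemma involutive_reflectFst (a : ℝ) : Function.Involutive (reflectFst a) := fun p => by simp

noncomputable def reflectFstAffine (a : ℝ) : (ℝ × ℝ) →ᵃ[ℝ] (ℝ × ℝ) :=
  AffineMap.mk' (reflectFst a) ((-LinearMap.id).prodMap LinearMap.id) 0
    (fun p => by ext <;> simp [sub_eq_neg_add])

lemma coe_reflectFstAffine (a : ℝ) : ⇑(reflectFstAffine a) = reflectFst a := rfl

lemma reflectFst_preimage_triangle (a h : ℝ) :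
    reflectFst a ⁻¹' convexHull ℝ {(0, 0), (a, 0), (a / 2, h)} =
      convexHull ℝ {(0, 0), (a, 0), (a / 2, h)} := by
  rw [← (involutive_reflectFst a).image_eq_preimage_symm, ← coe_reflectFstAffine,
    AffineMap.image_convexHull]
  simp only [Set.image_insert_eq, Set.image_singleton, coe_reflectFstAffine, reflectFst_apply,
    sub_zero, sub_self, sub_half]
  rw [Set.insert_comm]

section ReflectionSymmetry

variable {𝕜 F : Type*} [NontriviallyNormedField 𝕜] [NormedAddCommGroup F] [NormedSpace 𝕜 F]
  {g : 𝕜 → F} {a : 𝕜}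

lemma deriv_const_sub_of_antisymm (hg : ∀ t, g (a - t) = -g t) (x : 𝕜) :
    deriv g (a - x) = deriv g x := by
  have h := deriv_comp_const_sub g a x
  rw [funext hg, deriv.fun_neg] at h
  exact (neg_inj.1 h).symm

lemma deriv_const_sub_of_symm (hg : ∀ t, g (a - t) = g t) (x : 𝕜) :
    deriv g (a - x) = -deriv g x := by
  have h := deriv_comp_const_sub g a x
  rw [funext hg] at h
  exact neg_eq_iff_eq_neg.1 h.symm

end ReflectionSymmetry

/-- Orthogonality relations between `u₁`, `u₂` and their matching partial derivatives
over the equilateral triangle `E` with vertices `(0,0)`, `(1,0)`, `(1/2,√3/2)`. -/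
theorem stmt_15 (u₁ u₂ : ℝ → ℝ → ℝ)
    (hu₁ : ∀ x y, u₁ x y =
      2 * (cos (π * (2 * x - 1) / 3) + cos (2 * π * y / sqrt 3)) * sin (π * (2 * x - 1) / 3))
    (hu₂ : ∀ x y, u₂ x y =
      cos (2 * π * (2 * x - 1) / 3) - 2 * cos (π * (2 * x - 1) / 3) * cos (2 * π * y / sqrt 3))
    (E : Set (ℝ × ℝ))
    (hE : E = convexHull ℝ {((0 : ℝ), (0 : ℝ)), (1, 0), (1 / 2, sqrt 3 / 2)}) :
    (∫ p in E, u₁ p.1 p.2 * u₂ p.1 p.2) = 0 ∧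
    (∫ p in E, deriv (fun t => u₁ t p.2) p.1 * deriv (fun t => u₂ t p.2) p.1) = 0 ∧
    (∫ p in E, deriv (fun s => u₁ p.1 s) p.2 * deriv (fun s => u₂ p.1 s) p.2) = 0 := by
  have hσE : reflectFst 1 ⁻¹' E = E := hE ▸ reflectFst_preimage_triangle 1 _
  have hodd : ∀ x y, u₁ (1 - x) y = -u₁ x y := fun x y => by
    rw [hu₁, hu₁, show π * (2 * (1 - x) - 1) / 3 = -(π * (2 * x - 1) / 3) by ring, cos_neg,
      sin_neg]
    ring
  have heven : ∀ x y, u₂ (1 - x) y = u₂ x y := fun x y => by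
    rw [hu₂, hu₂, show π * (2 * (1 - x) - 1) / 3 = -(π * (2 * x - 1) / 3) by ring,
      show 2 * π * (2 * (1 - x) - 1) / 3 = -(2 * π * (2 * x - 1) / 3) by ring, cos_neg, cos_neg]
  refine ⟨?_, ?_, ?_⟩ <;>
    refine setIntegral_eq_zero_of_comp_eq_neg _ (measurePreserving_reflectFst 1) hσE
      fun p => ?_ <;>
    simp only [reflectFst_apply]
  · rw [hodd, heven, neg_mul]
  · rw [deriv_const_sub_of_antisymm (hodd · p.2), deriv_const_sub_of_symm (heven · p.2), mul_neg]
  · simp only [hodd, heven, deriv.fun_neg, neg_mul]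
end

section
/- For the equilateral triangle E with vertices (0,0), (1,0), (1/2,√3/2), the functions u₁(x,y) = 2[cos(π(2x−1)/3) + cos(2πy/√3)]·sin(π(2x−1)/3) and u₂(x,y) = cos(2π(2x−1)/3) − 2cos(π(2x−1)/3)cos(2πy/√3) satisfy ∫_E (∂u₁/∂x)(∂u₂/∂y) dA = 81√3/32 + π and ∫_E (∂u₁/∂y)(∂u₂/∂x) dA = 81√3/32 − π. -/
/-
In the variables θ = π(2x - 1)/3 and φ = 2πy/√3 both integrands are trigonometric polynomials.
Slicing the triangle horizontally, the slice at height y is |θ| ≤ a with a = (π - φ)/3, so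
integrating in θ first leaves an elementary integral over a ∈ [0, π/3]. The two integrals differ
by the integral of the Jacobian of (u₁, u₂), which is 2π.
-/

open MeasureTheory Real Set

theorem smul_add_smul_add_smul_mem_convexHull {E : Type*} [AddCommGroup E] [Module ℝ E]
    {a b c : E} {α β γ : ℝ} (hα : 0 ≤ α) (hβ : 0 ≤ β) (hγ : 0 ≤ γ) (h : α + β + γ = 1) :
    α • a + β • b + γ • c ∈ convexHull ℝ {a, b, c} := by
  have := (convex_convexHull ℝ {a, b, c}).sum_mem (t := Finset.univ) (w := ![α, β, γ])
    (z := ![a, b, c]) (by simp [Fin.forall_fin_succ, hα, hβ, hγ])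
    (by simp [Fin.sum_univ_three, h])
    (fun i _ => subset_convexHull ℝ _ (by fin_cases i <;> simp))
  simpa [Fin.sum_univ_three] using this

theorem convexHull_isoscelesTriangle {h : ℝ} (hh : 0 < h) :
    convexHull ℝ {((0 : ℝ), (0 : ℝ)), (1, 0), (1 / 2, h)} =
      {p : ℝ × ℝ | p.2 ∈ Icc 0 h ∧ p.1 ∈ Icc (p.2 / (2 * h)) (1 - p.2 / (2 * h))} := by
  have hapex : h / (2 * h) = 1 / 2 := by field_simp
  apply Subset.antisymm
  · refine convexHull_min ?_ ?_
    · rintro p (rfl | rfl | rfl) <;> norm_num [hh.le, hapex]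
    · rintro p ⟨⟨hp₀, hp₁⟩, hp₂, hp₃⟩ q ⟨⟨hq₀, hq₁⟩, hq₂, hq₃⟩ a b ha hb hab
      simp only [mem_ofPred_eq, mem_Icc, Prod.fst_add, Prod.snd_add, Prod.smul_fst,
        Prod.smul_snd, smul_eq_mul, add_div, mul_div_assoc]
      refine ⟨⟨by positivity, by nlinarith⟩, ?_, ?_⟩
      · nlinarith [mul_le_mul_of_nonneg_left hp₂ ha, mul_le_mul_of_nonneg_left hq₂ hb]
      · nlinarith [mul_le_mul_of_nonneg_left hp₃ ha, mul_le_mul_of_nonneg_left hq₃ hb]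
  · rintro ⟨x, y⟩ ⟨⟨hy₀, -⟩, hx₀, hx₁⟩
    dsimp only at hy₀ hx₀ hx₁
    convert smul_add_smul_add_smul_mem_convexHull (a := ((0 : ℝ), (0 : ℝ))) (b := (1, 0))
      (c := (1 / 2, h)) (α := 1 - x - y / (2 * h)) (β := x - y / (2 * h)) (γ := y / h)
      (by linarith) (by linarith) (by positivity) (by ring) using 1
    simp only [Prod.smul_mk, smul_eq_mul, Prod.mk_add_mk, Prod.mk.injEq]
    constructor <;> field_simp <;> ring

theorem setIntegral_fibers_eq_integral_integral {α β E : Type*} [MeasurableSpace α]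
    [MeasurableSpace β] [NormedAddCommGroup E] [NormedSpace ℝ E] {μ : Measure α}
    {ν : Measure β} [SFinite μ] [SFinite ν] {S : Set β} {R : β → Set α} {f : α × β → E}
    (hS : MeasurableSet S) (hT : MeasurableSet {p : α × β | p.2 ∈ S ∧ p.1 ∈ R p.2})
    (hf : IntegrableOn f {p : α × β | p.2 ∈ S ∧ p.1 ∈ R p.2} (μ.prod ν)) :
    ∫ p in {p : α × β | p.2 ∈ S ∧ p.1 ∈ R p.2}, f p ∂(μ.prod ν)
      = ∫ y in S, ∫ x in R y, f (x, y) ∂μ ∂ν := by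
  rw [← integral_indicator hT, integral_prod_symm _ (hf.integrable_indicator hT),
    ← integral_indicator hS]
  congr 1 with y
  by_cases hy : y ∈ S
  · have hR : MeasurableSet (R y) := by
      simpa [hy] using measurable_prodMk_right hT (y := y)
    rw [indicator_of_mem hy, ← integral_indicator hR]
    congr 1 with x
    by_cases hx : x ∈ R y <;> simp [hx, hy]
  · simp [hy]

theorem integral_equilateralTriangle_s16 {E : Type*} [NormedAddCommGroup E] [NormedSpace ℝ E]
    {F : ℝ × ℝ → E} (hF : Continuous F) :
    ∫ p in convexHull ℝ {((0 : ℝ), (0 : ℝ)), (1, 0), (1 / 2, √3 / 2)}, F p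
      = ∫ y in 0..√3 / 2, ∫ x in y / √3..1 - y / √3, F (x, y) := by
  have hcompact :=
    (toFinite {((0 : ℝ), (0 : ℝ)), (1, 0), (1 / 2, √3 / 2)}).isCompact_convexHull ℝ
  rw [convexHull_isoscelesTriangle (by positivity), show 2 * (√3 / 2) = √3 by ring]
    at hcompact ⊢
  rw [Measure.volume_eq_prod,
    setIntegral_fibers_eq_integral_integral (R := fun y => Icc (y / √3) (1 - y / √3))
      measurableSet_Icc hcompact.isClosed.measurableSet
      (hF.continuousOn.integrableOn_compact hcompact),
    integral_Icc_eq_integral_Ioc, ← intervalIntegral.integral_of_le (by positivity)]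
  refine intervalIntegral.integral_congr fun y hy => ?_
  have hle : y / √3 ≤ 1 / 2 := by
    rw [uIcc_of_le (by positivity)] at hy
    rw [div_le_iff₀ (by positivity)]
    linarith [hy.2]
  rw [integral_Icc_eq_integral_Ioc, ← intervalIntegral.integral_of_le (by linarith)]

theorem hasDerivAt_angle (x : ℝ) : HasDerivAt (fun t => π * (2 * t - 1) / 3) (2 * π / 3) x := by
  have h := (((hasDerivAt_id' x).const_mul 2).sub_const 1 |>.const_mul π).div_const 3
  exact h.congr_deriv (by ring)

theorem deriv_u₁_fst (x y : ℝ) :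
    deriv (fun t => 2 * (cos (π * (2 * t - 1) / 3) + cos (2 * π * y / √3))
      * sin (π * (2 * t - 1) / 3)) x
      = 4 * π / 3 * (cos (2 * (π * (2 * x - 1) / 3))
        + cos (2 * π * y / √3) * cos (π * (2 * x - 1) / 3)) := by
  have hθ := hasDerivAt_angle x
  refine ((((hθ.cos.add_const _).const_mul 2).mul hθ.sin).congr_deriv ?_).deriv
  rw [cos_two_mul]
  linear_combination (-(4 * π / 3)) * sin_sq_add_cos_sq (π * (2 * x - 1) / 3)

theorem deriv_u₁_snd (x y : ℝ) :
    deriv (fun s => 2 * (cos (π * (2 * x - 1) / 3) + cos (2 * π * s / √3))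
      * sin (π * (2 * x - 1) / 3)) y
      = -(4 * π / √3) * sin (π * (2 * x - 1) / 3) * sin (2 * π * y / √3) := by
  have hφ := ((hasDerivAt_id' y).const_mul (2 * π)).div_const √3
  refine ((((hφ.cos.const_add _).const_mul 2).mul_const _).congr_deriv ?_).deriv
  ring

theorem deriv_u₂_fst (x y : ℝ) :
    deriv (fun t => cos (2 * π * (2 * t - 1) / 3)
      - 2 * cos (π * (2 * t - 1) / 3) * cos (2 * π * y / √3)) x
      = 4 * π / 3 * (cos (2 * π * y / √3) * sin (π * (2 * x - 1) / 3)
        - sin (2 * (π * (2 * x - 1) / 3))) := by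
  have hθ := hasDerivAt_angle x
  have h2θ := (((hasDerivAt_id' x).const_mul 2).sub_const 1 |>.const_mul (2 * π)).div_const 3
  refine ((h2θ.cos.sub ((hθ.cos.const_mul 2).mul_const _)).congr_deriv ?_).deriv
  rw [show 2 * (π * (2 * x - 1) / 3) = 2 * π * (2 * x - 1) / 3 by ring]
  ring

theorem deriv_u₂_snd (x y : ℝ) :
    deriv (fun s => cos (2 * π * (2 * x - 1) / 3)
      - 2 * cos (π * (2 * x - 1) / 3) * cos (2 * π * s / √3)) y
      = 4 * π / √3 * cos (π * (2 * x - 1) / 3) * sin (2 * π * y / √3) := by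
  have hφ := ((hasDerivAt_id' y).const_mul (2 * π)).div_const √3
  refine (((hφ.cos.const_mul _).const_sub _).congr_deriv ?_).deriv
  ring

-- With `θ = π(2x - 1)/3` and `a = π/3 - 2πy/(3√3)` (so `2πy/√3 = π - 3a`), the slice of the
-- triangle at height `y` is `|θ| ≤ a`, and the `x`-integrals over it of `∂ₓu₁ ∂ᵧu₂ + ∂ᵧu₁ ∂ₓu₂`
-- and of the Jacobian `∂ₓu₁ ∂ᵧu₂ - ∂ᵧu₁ ∂ₓu₂` are `16π/√3` times these functions of `a`.
noncomputable def sumSlice (a : ℝ) : ℝ := sin (3 * a) * (sin a - cos (3 * a) * (sin a * cos a))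

noncomputable def jacobianSlice (a : ℝ) : ℝ := sin (3 * a) * (sin (3 * a) / 3 - a * cos (3 * a))

theorem continuous_sumSlice : Continuous sumSlice := by
  unfold sumSlice; fun_prop

theorem continuous_jacobianSlice : Continuous jacobianSlice := by
  unfold jacobianSlice; fun_prop

theorem integral_slice_u₁_fst_u₂_snd (y : ℝ) :
    ∫ x in y / √3..1 - y / √3,
      4 * π / 3 * (cos (2 * (π * (2 * x - 1) / 3))
        + cos (2 * π * y / √3) * cos (π * (2 * x - 1) / 3))
      * (4 * π / √3 * cos (π * (2 * x - 1) / 3) * sin (2 * π * y / √3))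
      = 8 * π / √3 * (sumSlice (π / 3 - 2 * π * y / (3 * √3))
        + jacobianSlice (π / 3 - 2 * π * y / (3 * √3))) := by
  set G : ℝ → ℝ := fun t => (sin t + sin (3 * t) / 3) / 2
    + cos (2 * π * y / √3) * (t + sin t * cos t) / 2 with hG_def
  have hG (t : ℝ) :
      HasDerivAt G (cos (2 * t) * cos t + cos (2 * π * y / √3) * cos t ^ 2) t := by
    have h3 := ((hasDerivAt_id' t).const_mul 3).sin
    refine (((hasDerivAt_sin t).add (h3.div_const 3)).div_const 2 |>.add
      (((hasDerivAt_id' t).add ((hasDerivAt_sin t).mul (hasDerivAt_cos t))).const_mul _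
        |>.div_const 2)).congr_deriv ?_
    have e : 2 * cos (2 * t) * cos t = cos t + cos (3 * t) := by
      rw [two_mul_cos_mul_cos]; ring_nf
    linear_combination (-1 / 2) * e - (cos (2 * π * y / √3) / 2) * sin_sq_add_cos_sq t
  have hF (x : ℝ) :
      HasDerivAt (fun x => 8 * π / √3 * sin (2 * π * y / √3) * G (π * (2 * x - 1) / 3))
      (4 * π / 3 * (cos (2 * (π * (2 * x - 1) / 3))
        + cos (2 * π * y / √3) * cos (π * (2 * x - 1) / 3))
      * (4 * π / √3 * cos (π * (2 * x - 1) / 3) * sin (2 * π * y / √3))) x := by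
    refine (((hG _).comp x (hasDerivAt_angle x)).const_mul _).congr_deriv ?_
    field_simp
    ring
  rw [intervalIntegral.integral_eq_sub_of_hasDerivAt (fun x _ => hF x)
    (Continuous.intervalIntegrable (by fun_prop) _ _)]
  set a := π / 3 - 2 * π * y / (3 * √3)
  simp only [hG_def]
  rw [show π * (2 * (1 - y / √3) - 1) / 3 = a by ring,
    show π * (2 * (y / √3) - 1) / 3 = -a by ring, show 2 * π * y / √3 = π - 3 * a by ring]
  simp only [sumSlice, jacobianSlice, mul_neg, sin_neg, cos_neg, sin_pi_sub, cos_pi_sub]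
  ring

theorem integral_slice_u₁_snd_u₂_fst (y : ℝ) :
    ∫ x in y / √3..1 - y / √3,
      -(4 * π / √3) * sin (π * (2 * x - 1) / 3) * sin (2 * π * y / √3)
      * (4 * π / 3 * (cos (2 * π * y / √3) * sin (π * (2 * x - 1) / 3)
        - sin (2 * (π * (2 * x - 1) / 3))))
      = 8 * π / √3 * (sumSlice (π / 3 - 2 * π * y / (3 * √3))
        - jacobianSlice (π / 3 - 2 * π * y / (3 * √3))) := by
  set G : ℝ → ℝ := fun t => (sin t - sin (3 * t) / 3) / 2
    - cos (2 * π * y / √3) * (t - sin t * cos t) / 2 with hG_def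
  have hG (t : ℝ) :
      HasDerivAt G (sin (2 * t) * sin t - cos (2 * π * y / √3) * sin t ^ 2) t := by
    have h3 := ((hasDerivAt_id' t).const_mul 3).sin
    refine (((hasDerivAt_sin t).sub (h3.div_const 3)).div_const 2 |>.sub
      (((hasDerivAt_id' t).sub ((hasDerivAt_sin t).mul (hasDerivAt_cos t))).const_mul _
        |>.div_const 2)).congr_deriv ?_
    have e : 2 * sin (2 * t) * sin t = cos t - cos (3 * t) := by
      rw [two_mul_sin_mul_sin]; ring_nf
    linear_combination (-1 / 2) * e + (cos (2 * π * y / √3) / 2) * sin_sq_add_cos_sq t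
  have hF (x : ℝ) :
      HasDerivAt (fun x => 8 * π / √3 * sin (2 * π * y / √3) * G (π * (2 * x - 1) / 3))
      (-(4 * π / √3) * sin (π * (2 * x - 1) / 3) * sin (2 * π * y / √3)
      * (4 * π / 3 * (cos (2 * π * y / √3) * sin (π * (2 * x - 1) / 3)
        - sin (2 * (π * (2 * x - 1) / 3))))) x := by
    refine (((hG _).comp x (hasDerivAt_angle x)).const_mul _).congr_deriv ?_
    field_simp
    ring
  rw [intervalIntegral.integral_eq_sub_of_hasDerivAt (fun x _ => hF x)
    (Continuous.intervalIntegrable (by fun_prop) _ _)]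
  set a := π / 3 - 2 * π * y / (3 * √3)
  simp only [hG_def]
  rw [show π * (2 * (1 - y / √3) - 1) / 3 = a by ring,
    show π * (2 * (y / √3) - 1) / 3 = -a by ring, show 2 * π * y / √3 = π - 3 * a by ring]
  simp only [sumSlice, jacobianSlice, mul_neg, sin_neg, cos_neg, sin_pi_sub, cos_pi_sub]
  ring

theorem integral_comp_sliceWidth (g : ℝ → ℝ) :
    ∫ y in 0..√3 / 2, 8 * π / √3 * g (π / 3 - 2 * π * y / (3 * √3))
      = 12 * ∫ a in 0..π / 3, g a := by
  have hc : -(2 * π / (3 * √3)) ≠ 0 := neg_ne_zero.mpr (by positivity)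
  simp only [show ∀ y, π / 3 - 2 * π * y / (3 * √3) = -(2 * π / (3 * √3)) * y + π / 3 from
      fun y => by ring, intervalIntegral.integral_const_mul,
    intervalIntegral.integral_comp_mul_add g hc]
  rw [show -(2 * π / (3 * √3)) * 0 + π / 3 = π / 3 by ring,
    show -(2 * π / (3 * √3)) * (√3 / 2) + π / 3 = 0 by field_simp; ring,
    intervalIntegral.integral_symm, smul_eq_mul]
  field_simp
  ring

theorem integral_sumSlice : ∫ a in 0..π / 3, sumSlice a = 27 * √3 / 128 := by
  have hF (a : ℝ) :
      HasDerivAt (fun a => sin (2 * a) / 4 - 5 * sin (4 * a) / 32 + sin (8 * a) / 64)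
        (sumSlice a) a := by
    have hsin (k : ℝ) := ((hasDerivAt_id' a).const_mul k).sin
    refine ((((hsin 2).div_const 4).sub (((hsin 4).const_mul 5).div_const 32)).add
      ((hsin 8).div_const 64)).congr_deriv ?_
    have e₁ : 2 * sin (3 * a) * sin a = cos (2 * a) - cos (4 * a) := by
      rw [two_mul_sin_mul_sin]; ring_nf
    have e₂ : 2 * sin (6 * a) * sin (2 * a) = cos (4 * a) - cos (8 * a) := by
      rw [two_mul_sin_mul_sin]; ring_nf
    have e₃ : sin (6 * a) = 2 * sin (3 * a) * cos (3 * a) := by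
      rw [← sin_two_mul]; ring_nf
    unfold sumSlice
    linear_combination (-1 / 2) * e₁ + (1 / 8) * e₂ - (sin (2 * a) / 4) * e₃
      - (sin (3 * a) * cos (3 * a) / 2) * sin_two_mul a
  rw [intervalIntegral.integral_eq_sub_of_hasDerivAt (fun a _ => hF a)
    (continuous_sumSlice.intervalIntegrable _ _)]
  have h₂ : sin (2 * (π / 3)) = √3 / 2 := by
    rw [show 2 * (π / 3) = π - π / 3 by ring, sin_pi_sub, sin_pi_div_three]
  have h₄ : sin (4 * (π / 3)) = -(√3 / 2) := by
    rw [show 4 * (π / 3) = π / 3 + π by ring, sin_add_pi, sin_pi_div_three]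
  have h₈ : sin (8 * (π / 3)) = √3 / 2 := by
    rw [show 8 * (π / 3) = 2 * (π / 3) + 2 * π by ring, sin_add_two_pi, h₂]
  simp only [h₂, h₄, h₈, mul_zero, sin_zero]
  ring

theorem integral_jacobianSlice : ∫ a in 0..π / 3, jacobianSlice a = π / 12 := by
  have hF (a : ℝ) :
      HasDerivAt (fun a => a * cos (3 * a) ^ 2 / 6 + a / 12 - sin (3 * a) * cos (3 * a) / 12)
        (jacobianSlice a) a := by
    have h3 := (hasDerivAt_id' a).const_mul 3
    refine (((((hasDerivAt_id' a).mul (h3.cos.fun_pow 2)).div_const 6).add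
      ((hasDerivAt_id' a).div_const 12)).sub ((h3.sin.mul h3.cos).div_const 12)).congr_deriv ?_
    unfold jacobianSlice
    linear_combination (-1 / 12) * sin_sq_add_cos_sq (3 * a)
  rw [intervalIntegral.integral_eq_sub_of_hasDerivAt (fun a _ => hF a)
    (continuous_jacobianSlice.intervalIntegrable _ _)]
  simp only [show 3 * (π / 3) = π by ring, cos_pi, sin_pi, mul_zero, sin_zero, cos_zero]
  ring

/-- Cross-term integrals of the partial derivatives of `u₁` and `u₂` over the
equilateral triangle `E` with vertices `(0,0)`, `(1,0)`, `(1/2,√3/2)`: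
`∫_E (∂u₁/∂x)(∂u₂/∂y) = 81√3/32 + π` and `∫_E (∂u₁/∂y)(∂u₂/∂x) = 81√3/32 − π`. -/
theorem stmt_16 (u₁ u₂ : ℝ → ℝ → ℝ)
    (hu₁ : ∀ x y, u₁ x y =
      2 * (cos (π * (2 * x - 1) / 3) + cos (2 * π * y / sqrt 3)) * sin (π * (2 * x - 1) / 3))
    (hu₂ : ∀ x y, u₂ x y =
      cos (2 * π * (2 * x - 1) / 3) - 2 * cos (π * (2 * x - 1) / 3) * cos (2 * π * y / sqrt 3))
    (E : Set (ℝ × ℝ))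
    (hE : E = convexHull ℝ {((0 : ℝ), (0 : ℝ)), (1, 0), (1 / 2, sqrt 3 / 2)}) :
    (∫ p in E, deriv (fun t => u₁ t p.2) p.1 * deriv (fun s => u₂ p.1 s) p.2)
      = 81 * sqrt 3 / 32 + π ∧
    (∫ p in E, deriv (fun s => u₁ p.1 s) p.2 * deriv (fun t => u₂ t p.2) p.1)
      = 81 * sqrt 3 / 32 - π := by
  subst hE
  simp only [hu₁, hu₂, deriv_u₁_fst, deriv_u₁_snd, deriv_u₂_fst, deriv_u₂_snd]
  rw [integral_equilateralTriangle_s16 (by fun_prop), integral_equilateralTriangle_s16 (by fun_prop)]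
  simp only [integral_slice_u₁_fst_u₂_snd, integral_slice_u₁_snd_u₂_fst]
  have hsum : IntervalIntegrable sumSlice volume 0 (π / 3) :=
    continuous_sumSlice.intervalIntegrable _ _
  have hjac : IntervalIntegrable jacobianSlice volume 0 (π / 3) :=
    continuous_jacobianSlice.intervalIntegrable _ _
  rw [integral_comp_sliceWidth (fun a => sumSlice a + jacobianSlice a),
    integral_comp_sliceWidth (fun a => sumSlice a - jacobianSlice a),
    intervalIntegral.integral_add hsum hjac, intervalIntegral.integral_sub hsum hjac,
    integral_sumSlice, integral_jacobianSlice]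
  constructor <;> ring
end

section
/- Let T be the triangle with vertices (−1,0), (1,0), (a,b), where a, b are real with b > 0, and let f₁(x,y) = x − a/3 and f₂(x,y) = (x − a/3)² − (3 + a²)/18. Then ∫_T f₂ dA = 0, ∫_T ∇f₁·∇f₂ dA = 0, and the Rayleigh quotient of f₂ over T equals 360/(7(3 + a²)), i.e. 7(3 + a²)·∫_T |∇f₂|² dA = 360·∫_T f₂² dA with ∫_T f₂² dA > 0. -/
/-! Every integrand depends on `x` only, so slicing `T` horizontally and rescaling `y = b u`
gives `∫_T g(x) = b ∫₀¹ ∫_{-1+(a+1)u}^{1+(a-1)u} g(x) dx du`, a polynomial integral when `g` is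
a polynomial. The moments of `x - a/3` over `T` are `b, 0, b(3+a²)/18` and `b(3+a²)²/135` in
degrees `0, 1, 2, 4` (`a/3` is the abscissa of the centroid), and `f₂`, `∇f₁·∇f₂ = 2(x - a/3)`,
`|∇f₂|² = 4(x - a/3)²` and `f₂²` are combinations of these powers: with `s = (3+a²)/18`,
`∫_T f₂ = 0`, `∫_T |∇f₂|² = 4bs` and `∫_T f₂² = (12/5 - 1) b s² = 7bs²/5`. -/

open MeasureTheory Set

theorem integral_add_mul_pow_zero_one (α β : ℝ) (n : ℕ) :
    ∫ u in (0 : ℝ)..1, (α + β * u) ^ n =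
      ∑ j ∈ Finset.range (n + 1), n.choose j * α ^ (n - j) * β ^ j / (j + 1) := by
  calc ∫ u in (0 : ℝ)..1, (α + β * u) ^ n
      = ∫ u in (0 : ℝ)..1,
          ∑ j ∈ Finset.range (n + 1), n.choose j * α ^ (n - j) * β ^ j * u ^ j := by
        congr with u
        rw [add_comm, add_pow]
        exact Finset.sum_congr rfl fun j _ => by ring
    _ = ∑ j ∈ Finset.range (n + 1),
          n.choose j * α ^ (n - j) * β ^ j * ∫ u in (0 : ℝ)..1, u ^ j := by
        rw [intervalIntegral.integral_finsetSum fun j _ =>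
          ((continuous_pow j).const_mul _).intervalIntegrable _ _]
        simp only [intervalIntegral.integral_const_mul]
    _ = _ := by simp [integral_pow, div_eq_mul_inv, mul_assoc]

section Triangle

variable {a b c d : ℝ}

theorem convexHull_triangle_eq (hcd : c < d) (hb : 0 < b) :
    convexHull ℝ {(c, 0), (d, 0), (a, b)} =
      {p : ℝ × ℝ | p.2 ∈ Icc 0 b ∧
        p.1 ∈ Icc (c + (a - c) * (p.2 / b)) (d + (a - d) * (p.2 / b))} := by
  apply Subset.antisymm
  · refine convexHull_min ?_ ?_
    · rintro p (rfl | rfl | rfl) <;> simp [hb.le, hcd.le, hb.ne']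
    · rintro ⟨x₁, y₁⟩ ⟨⟨hy₁, hy₁'⟩, hx₁, hx₁'⟩ ⟨x₂, y₂⟩ ⟨⟨hy₂, hy₂'⟩, hx₂, hx₂'⟩ s t hs ht hst
      dsimp only at *
      obtain rfl : t = 1 - s := by linarith
      have hu : (s * y₁ + (1 - s) * y₂) / b = s * (y₁ / b) + (1 - s) * (y₂ / b) := by ring
      simp only [Prod.smul_mk, Prod.mk_add_mk, smul_eq_mul, mem_ofPred_eq, mem_Icc, hu]
      refine ⟨⟨by positivity, by nlinarith⟩, ?_, ?_⟩
      · linear_combination s * hx₁ + (1 - s) * hx₂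
      · linear_combination s * hx₁' + (1 - s) * hx₂'
  · rintro ⟨x, y⟩ ⟨⟨hy, hy'⟩, hx, hx'⟩
    dsimp only at *
    set u := y / b with hu
    have hdc := sub_pos.2 hcd
    refine mem_convexHull_of_exists_fintype
      ![(d + (a - d) * u - x) / (d - c), (x - (c + (a - c) * u)) / (d - c), u]
      ![(c, 0), (d, 0), (a, b)] ?_ ?_ ?_ ?_
    · intro i
      fin_cases i <;> simp only [Fin.reduceFinMk, Matrix.cons_val]
      · exact div_nonneg (by linarith) hdc.le
      · exact div_nonneg (by linarith) hdc.le
      · positivity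
    · simp only [Fin.sum_univ_three, Matrix.cons_val]
      field_simp
      ring
    · intro i; fin_cases i <;> simp
    · simp only [Fin.sum_univ_three, Matrix.cons_val, Prod.smul_mk, smul_eq_mul, Prod.mk_add_mk]
      ext
      · field_simp
        ring
      · simp [hu, hb.ne']

theorem setIntegral_triangle_fst (hcd : c < d) (hb : 0 < b) {g : ℝ → ℝ} (hg : Continuous g) :
    ∫ p in convexHull ℝ {(c, 0), (d, 0), (a, b)}, g p.1 =
      b * ∫ u in (0 : ℝ)..1, ∫ x in c + (a - c) * u..d + (a - d) * u, g x := by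
  set T := convexHull ℝ {(c, 0), (d, 0), (a, b)}
  set slice := fun u : ℝ => ∫ x in c + (a - c) * u..d + (a - d) * u, g x
  have hT : IsCompact T := (toFinite _).isCompact_convexHull ℝ
  have hfiber (y : ℝ) :
      ∫ x, T.indicator (fun p => g p.1) (x, y) =
        (Icc 0 b).indicator (fun y => slice (y / b)) y := by
    by_cases hy : y ∈ Icc 0 b
    · have hlr : c + (a - c) * (y / b) ≤ d + (a - d) * (y / b) := by
        have : y / b ≤ 1 := (div_le_one hb).2 hy.2
        nlinarith
      simp only [indicator_of_mem hy, slice, intervalIntegral.integral_of_le hlr,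
        ← integral_Icc_eq_integral_Ioc, ← integral_indicator measurableSet_Icc]
      congr with x
      simp [indicator_apply, T, convexHull_triangle_eq hcd hb, hy.1, hy.2]
    · rw [mem_Icc] at hy
      simp [T, convexHull_triangle_eq hcd hb, hy]
  have hint : Integrable (T.indicator fun p => g p.1) (volume.prod volume) :=
    (integrable_indicator_iff hT.measurableSet).2
      ((hg.comp continuous_fst).continuousOn.integrableOn_compact hT)
  calc ∫ p in T, g p.1
      = ∫ y, ∫ x, T.indicator (fun p => g p.1) (x, y) := by
        rw [← integral_indicator hT.measurableSet, Measure.volume_eq_prod,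
          integral_prod_symm _ hint]
    _ = ∫ y in (0 : ℝ)..b, slice (y / b) := by
        rw [funext hfiber, integral_indicator measurableSet_Icc, integral_Icc_eq_integral_Ioc,
          intervalIntegral.integral_of_le hb.le]
    _ = b * ∫ u in (0 : ℝ)..1, slice u := by
        rw [intervalIntegral.integral_comp_div _ hb.ne', zero_div, div_self hb.ne', smul_eq_mul]

theorem setIntegral_triangle_sub_pow (hcd : c < d) (hb : 0 < b) (x₀ : ℝ) (k : ℕ) :
    ∫ p in convexHull ℝ {(c, 0), (d, 0), (a, b)}, (p.1 - x₀) ^ k =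
      b / (k + 1) * ((∫ u in (0 : ℝ)..1, (d - x₀ + (a - d) * u) ^ (k + 1)) -
        ∫ u in (0 : ℝ)..1, (c - x₀ + (a - c) * u) ^ (k + 1)) := by
  rw [setIntegral_triangle_fst (g := fun x => (x - x₀) ^ k) hcd hb (by fun_prop)]
  simp_rw [intervalIntegral.integral_comp_sub_right (fun x => x ^ k), integral_pow]
  rw [intervalIntegral.integral_div, intervalIntegral.integral_sub
    ((by fun_prop : Continuous _).intervalIntegrable _ _)
    ((by fun_prop : Continuous _).intervalIntegrable _ _)]
  simp only [add_sub_right_comm]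
  ring

end Triangle

theorem setIntegral_triangle_centered_quartic {a b : ℝ} (hb : 0 < b) (g : ℝ × ℝ → ℝ)
    (q₀ q₁ q₂ q₄ : ℝ)
    (hg : ∀ p, g p = q₀ + q₁ * (p.1 - a / 3) + q₂ * (p.1 - a / 3) ^ 2 + q₄ * (p.1 - a / 3) ^ 4) :
    ∫ p in convexHull ℝ {((-1 : ℝ), (0 : ℝ)), (1, 0), (a, b)}, g p =
      b * (q₀ + q₂ * ((3 + a ^ 2) / 18) + q₄ * ((3 + a ^ 2) ^ 2 / 135)) := by
  simp only [hg]
  set T := convexHull ℝ {((-1 : ℝ), (0 : ℝ)), (1, 0), (a, b)}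
  have hT : IsCompact T := (toFinite _).isCompact_convexHull ℝ
  have hmoment (k : ℕ) : ∫ p in T, (p.1 - a / 3) ^ k =
      b / (k + 1) * (∑ j ∈ Finset.range (k + 2),
        (k + 1).choose j * ((1 - a / 3) ^ (k + 1 - j) * (a - 1) ^ j -
          (-1 - a / 3) ^ (k + 1 - j) * (a + 1) ^ j) / (j + 1)) := by
    rw [setIntegral_triangle_sub_pow (by norm_num) hb, integral_add_mul_pow_zero_one,
      integral_add_mul_pow_zero_one, ← Finset.sum_sub_distrib]
    congr 1
    exact Finset.sum_congr rfl fun j _ => by ring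
  obtain ⟨h0, h1, h2, h4⟩ :
      ∫ p in T, (p.1 - a / 3) ^ 0 = b ∧ ∫ p in T, (p.1 - a / 3) ^ 1 = 0 ∧
        ∫ p in T, (p.1 - a / 3) ^ 2 = b * ((3 + a ^ 2) / 18) ∧
        ∫ p in T, (p.1 - a / 3) ^ 4 = b * ((3 + a ^ 2) ^ 2 / 135) := by
    refine ⟨?_, ?_, ?_, ?_⟩ <;>
    · rw [hmoment]
      simp only [Finset.sum_range_succ, Finset.sum_range_zero, Nat.choose]
      push_cast
      ring
  calc ∫ p in T, (q₀ + q₁ * (p.1 - a / 3) + q₂ * (p.1 - a / 3) ^ 2 + q₄ * (p.1 - a / 3) ^ 4)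
      = ∫ p in T, (q₀ * (p.1 - a / 3) ^ 0 + q₁ * (p.1 - a / 3) ^ 1 + q₂ * (p.1 - a / 3) ^ 2 +
          q₄ * (p.1 - a / 3) ^ 4) := by simp only [pow_zero, pow_one, mul_one]
    _ = q₀ * (∫ p in T, (p.1 - a / 3) ^ 0) + q₁ * (∫ p in T, (p.1 - a / 3) ^ 1) +
          q₂ * (∫ p in T, (p.1 - a / 3) ^ 2) + q₄ * ∫ p in T, (p.1 - a / 3) ^ 4 := by
      rw [integral_add, integral_add, integral_add]
      · simp only [integral_const_mul]
      all_goals exact (by fun_prop : Continuous _).continuousOn.integrableOn_compact hT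
    _ = _ := by rw [h0, h1, h2, h4]; ring

/-- For the triangle `T` with vertices `(−1,0)`, `(1,0)`, `(a,b)` (`b > 0`) and the
trial functions `f₁(x,y) = x − a/3`, `f₂(x,y) = (x − a/3)² − (3+a²)/18`:
`∫_T f₂ = 0`, `∫_T ∇f₁·∇f₂ = 0`, and the Rayleigh quotient of `f₂` equals
`360/(7(3+a²))`, i.e. `7(3+a²)∫_T |∇f₂|² = 360 ∫_T f₂²` with `∫_T f₂² > 0`. -/
theorem stmt_18 (a b : ℝ) (hb : 0 < b)
    (T : Set (ℝ × ℝ))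
    (hT : T = convexHull ℝ {((-1 : ℝ), (0 : ℝ)), (1, 0), (a, b)})
    (f₁ f₂ : ℝ → ℝ → ℝ)
    (hf₁ : ∀ x y, f₁ x y = x - a / 3)
    (hf₂ : ∀ x y, f₂ x y = (x - a / 3) ^ 2 - (3 + a ^ 2) / 18) :
    (∫ p in T, f₂ p.1 p.2) = 0 ∧
    (∫ p in T, (deriv (fun t => f₁ t p.2) p.1 * deriv (fun t => f₂ t p.2) p.1
        + deriv (fun s => f₁ p.1 s) p.2 * deriv (fun s => f₂ p.1 s) p.2)) = 0 ∧
    7 * (3 + a ^ 2) *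
        (∫ p in T, ((deriv (fun t => f₂ t p.2) p.1) ^ 2 + (deriv (fun s => f₂ p.1 s) p.2) ^ 2))
      = 360 * ∫ p in T, (f₂ p.1 p.2) ^ 2 ∧
    (0 < ∫ p in T, (f₂ p.1 p.2) ^ 2) := by
  obtain rfl : f₁ = fun x _ => x - a / 3 := funext₂ hf₁
  obtain rfl : f₂ = fun x _ => (x - a / 3) ^ 2 - (3 + a ^ 2) / 18 := funext₂ hf₂
  subst hT
  have hderiv (x : ℝ) :
      deriv (fun t => (t - a / 3) ^ 2 - (3 + a ^ 2) / 18) x = 2 * (x - a / 3) := by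
    simp
  simp only [hderiv, deriv_sub_const, deriv_id'', deriv_const]
  have hI := setIntegral_triangle_centered_quartic (a := a) hb
  refine ⟨?_, ?_, ?_, ?_⟩
  · refine (hI _ (-(3 + a ^ 2) / 18) 0 1 0 fun p => ?_).trans ?_ <;> ring
  · refine (hI _ 0 2 0 0 fun p => ?_).trans ?_ <;> ring
  · rw [hI _ 0 0 4 0 fun p => by ring,
      hI _ (((3 + a ^ 2) / 18) ^ 2) 0 (-2 * ((3 + a ^ 2) / 18)) 1 fun p => by ring]
    ring
  · rw [hI _ (((3 + a ^ 2) / 18) ^ 2) 0 (-2 * ((3 + a ^ 2) / 18)) 1 fun p => by ring]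
    have := mul_pos hb (pow_pos (by positivity : (0 : ℝ) < 3 + a ^ 2) 2)
    linarith
end
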